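/- Let c ≥ 1, let G₁ and G₂ be groups, and let π₁ : F₁ → G₁, π₂ : F₂ → G₂ and π : F → G₁ × G₂ be surjective group homomorphisms from free groups, with kernels R₁, R₂ and R respectively. Then there is a group isomorphism (R ∩ γ_{c+1}(F))/⟨T_{c+1}(F) ∩ R⟩ ≅ (R₁ ∩ γ_{c+1}(F₁))/⟨T_{c+1}(F₁) ∩ R₁⟩ × (R₂ ∩ γ_{c+1}(F₂))/⟨T_{c+1}(F₂) ∩ R₂⟩; that is, the c-nilpotent B̃₀-invariant of G₁ × G₂ is the direct product of the c-nilpotent B̃₀-invariants of G₁ and G₂. -/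

import Mathlib

open Subgroup
open scoped commutatorElement

/-- `Tset G c` is the set `T_{c+1}(G)` of left-normed commutators of weight `c+1` in `G`:
`Tset G 0 = G` (weight-one "commutators", i.e. all elements), and
`Tset G (n+1) = {⁅a, g⁆ | a ∈ Tset G n, g ∈ G}`. -/
def Tset (G : Type*) [Group G] : ℕ → Set G
  | 0 => Set.univ
  | n + 1 => {x | ∃ a ∈ Tset G n, ∃ g : G, x = ⁅a, g⁆}

theorem Tset_conj {G : Type*} [Group G] (n : ℕ) {x : G} (hx : x ∈ Tset G n) (g : G) :
    g * x * g⁻¹ ∈ Tset G n := by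
  induction n generalizing x with
  | zero => trivial
  | succ n ih =>
      obtain ⟨a, ha, b, rfl⟩ := hx
      exact ⟨g * a * g⁻¹, ih ha, g * b * g⁻¹, conjugate_commutatorElement a b g⟩

/-- `Tcl c S = ⟨T_{c+1}(G) ∩ S⟩`, the subgroup generated by the left-normed commutators of
weight `c+1` lying in `S`. -/
def Tcl {G : Type*} [Group G] (c : ℕ) (S : Subgroup G) : Subgroup G :=
  Subgroup.closure (Tset G c ∩ (S : Set G))

instance Tcl_normal {G : Type*} [Group G] (c : ℕ) (S : Subgroup G) [hS : S.Normal] :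
    (Tcl c S).Normal := by
  constructor
  intro n hn g
  induction hn using Subgroup.closure_induction with
  | mem x hx =>
      exact Subgroup.subset_closure ⟨Tset_conj c hx.1 g, hS.conj_mem x hx.2 g⟩
  | one => simpa using (Tcl c S).one_mem
  | mul x y _ _ hx hy =>
      have h : g * (x * y) * g⁻¹ = (g * x * g⁻¹) * (g * y * g⁻¹) := by group
      rw [h]; exact mul_mem hx hy
  | inv x _ hx =>
      have h : g * x⁻¹ * g⁻¹ = (g * x * g⁻¹)⁻¹ := by group
      rw [h]; exact inv_mem hx

theorem Tset_subset_lcs {G : Type*} [Group G] (n : ℕ) :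
    Tset G n ⊆ (((⊤ : Subgroup G).lowerCentralSeries n : Subgroup G) : Set G) := by
  induction n with
  | zero => intro x _; simp [Subgroup.lowerCentralSeries_zero]
  | succ n ih =>
      rintro x ⟨a, ha, b, rfl⟩
      rw [Subgroup.lowerCentralSeries_succ]
      exact Subgroup.commutator_mem_commutator (ih ha) (Subgroup.mem_top b)

theorem Tcl_le {G : Type*} [Group G] (c : ℕ) (S : Subgroup G) : Tcl c S ≤ S :=
  (Subgroup.closure_le S).2 Set.inter_subset_right

theorem Tcl_le_lcs {G : Type*} [Group G] (c : ℕ) (S : Subgroup G) :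
    Tcl c S ≤ (⊤ : Subgroup G).lowerCentralSeries c :=
  (Subgroup.closure_le _).2 fun _ hx => Tset_subset_lcs c hx.1

theorem Tcl_mono {G : Type*} [Group G] (c : ℕ) {R K : Subgroup G} (h : R ≤ K) :
    Tcl c R ≤ Tcl c K :=
  Subgroup.closure_mono (Set.inter_subset_inter_right _ h)

theorem subgroupOf_le_comap_inclusion {F : Type*} [Group F] {A B H₁ H₂ : Subgroup F}
    (hH : H₁ ≤ H₂) (hAB : A ≤ B) :
    A.subgroupOf H₁ ≤ (B.subgroupOf H₂).comap (Subgroup.inclusion hH) := by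
  intro x hx
  rw [Subgroup.mem_comap, Subgroup.mem_subgroupOf, Subgroup.coe_inclusion]
  exact hAB (Subgroup.mem_subgroupOf.mp hx)

/-!
The invariant does not depend on the presentation: a lift `θ : F → F` of the identity of
`G = F/R` satisfies `x ≡ θ x` modulo `⟨T_{c+1}(F) ∩ R⟩` on `γ_{c+1}(F)`. For `G₁ × G₂` take the
free group on `α₁ ⊕ α₂`, with retractions `ρᵢ` onto the free factors and `θᵢ = ιᵢ ∘ ρᵢ`; there
`x ≡ θ₁ x · θ₂ x` on `γ_{c+1}(F)`, so the maps induced by `(ρ₁, ρ₂)` and by `ι₁ · ι₂` are mutually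
inverse. (The invariant is abelian because `[γ_{c+1}, R] ≤ ⟨T_{c+1} ∩ R⟩`, so `ι₁ · ι₂` is a
homomorphism.)

Both congruences are cases of one: `φ x ≡ θ₁ x · θ₂ x` on `γ_{c+1}(F)` if it holds modulo `R` and
`θ₁ F`, `θ₂ F` commute modulo `R`. By induction on `c`: modulo `⟨T_{c+2} ∩ R⟩`, the map
`x ↦ θ₁ x · θ₂ x` is a homomorphism on `γ_{c+1}(F)` turning conjugation by `g` into conjugation
by `φ g`, and its defect from `φ` is central there, so it agrees with `φ` on the generators
`⁅a, g⁆` of `γ_{c+2}(F)`.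
-/

theorem apply_mem_Tset {F G : Type*} [Group F] [Group G] (θ : F →* G) {n : ℕ} {x : F}
    (hx : x ∈ Tset F n) : θ x ∈ Tset G n := by
  induction n generalizing x with
  | zero => trivial
  | succ n ih =>
      obtain ⟨a, ha, b, rfl⟩ := hx
      exact ⟨θ a, ih ha, θ b, map_commutatorElement θ a b⟩

theorem apply_mem_lowerCentralSeries {F G : Type*} [Group F] [Group G] (θ : F →* G) {n : ℕ}
    {x : F} (hx : x ∈ (⊤ : Subgroup F).lowerCentralSeries n) :
    θ x ∈ (⊤ : Subgroup G).lowerCentralSeries n := by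
  have hmap := map_lowerCentralSeries ⊤ θ n ▸ mem_map_of_mem θ hx
  exact lowerCentralSeries_mono n le_top hmap

section Commutators

variable {G : Type*} [Group G]

theorem commute_mk_iff_commutatorElement_mem {N : Subgroup G} [N.Normal] {a b : G} :
    Commute (a : G ⧸ N) (b : G ⧸ N) ↔ ⁅a, b⁆ ∈ N := by
  rw [← commutatorElement_eq_one_iff_commute, ← QuotientGroup.eq_one_iff]
  exact Iff.rfl

theorem commutatorElement_mem_of_mem_closure {N : Subgroup G} [N.Normal] {T : Set G} {a b : G}
    (hT : ∀ s ∈ T, ⁅s, b⁆ ∈ N) (ha : a ∈ closure T) : ⁅a, b⁆ ∈ N := by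
  have hle : closure T ≤ (centralizer {(b : G ⧸ N)}).comap (QuotientGroup.mk' N) :=
    (closure_le _).2 fun s hs =>
      mem_centralizer_singleton_iff.2 (commute_mk_iff_commutatorElement_mem.2 (hT s hs)).eq
  exact commute_mk_iff_commutatorElement_mem.1 (mem_centralizer_singleton_iff.1 (hle ha))

theorem commutatorElement_mul_of_mem_center {a z : G}
    (hz : z ∈ center G) (b : G) : ⁅a * z, b⁆ = ⁅a, b⁆ := by
  simp only [commutatorElement_def, mul_inv_rev, mul_assoc, ← mem_center_iff.1 hz b,
    mul_inv_cancel_left]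

end Commutators

section Tcl

variable {G : Type*} [Group G]

theorem Tcl_zero (R : Subgroup G) : Tcl 0 R = R := by
  rw [Tcl, Tset, Set.univ_inter, closure_eq]

theorem commutatorElement_mem_Tcl_succ {R : Subgroup G} [R.Normal] {i : ℕ} {T : Set G} {a b : G}
    (hT : T ⊆ Tset G i) (hTb : ∀ s ∈ T, ⁅s, b⁆ ∈ R) (ha : a ∈ closure T) :
    ⁅a, b⁆ ∈ Tcl (i + 1) R :=
  commutatorElement_mem_of_mem_closure
    (fun s hs => subset_closure ⟨⟨s, hT hs, b, rfl⟩, hTb s hs⟩) ha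

theorem closure_Tset (n : ℕ) : closure (Tset G n) = (⊤ : Subgroup G).lowerCentralSeries n := by
  refine le_antisymm ((closure_le _).2 (Tset_subset_lcs n)) ?_
  induction n with
  | zero => simp [Tset]
  | succ n ih =>
      rw [Subgroup.lowerCentralSeries_succ, commutator_le]
      intro a ha g _
      simpa [Tcl] using
        commutatorElement_mem_Tcl_succ (R := ⊤) subset_rfl (fun _ _ => mem_top _) (ih ha)

theorem commutatorElement_mem_Tcl_succ_of_mem_Tcl {R : Subgroup G} [R.Normal] {i : ℕ} {t : G}
    (ht : t ∈ Tcl i R) (g : G) : ⁅t, g⁆ ∈ Tcl (i + 1) R :=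
  commutatorElement_mem_Tcl_succ Set.inter_subset_left
    (fun _ hs => commutator_le_left R ⊤ (commutator_mem_commutator hs.2 (mem_top g))) ht

theorem commutatorElement_mem_Tcl_succ_of_mem_lowerCentralSeries {R : Subgroup G} [R.Normal]
    {i : ℕ} {x r : G} (hx : x ∈ (⊤ : Subgroup G).lowerCentralSeries i) (hr : r ∈ R) :
    ⁅x, r⁆ ∈ Tcl (i + 1) R :=
  commutatorElement_mem_Tcl_succ subset_rfl
    (fun s _ => commutator_le_right (⊤ : Subgroup G) R (commutator_mem_commutator (mem_top s) hr))
    (by rwa [closure_Tset])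

theorem commutatorElement_mem_Tcl {R : Subgroup G} [R.Normal] {c : ℕ} {x r : G}
    (hx : x ∈ (⊤ : Subgroup G).lowerCentralSeries c) (hr : r ∈ R) : ⁅x, r⁆ ∈ Tcl c R := by
  cases c with
  | zero => rw [Tcl_zero]; exact commutator_le_right ⊤ R (commutator_mem_commutator hx hr)
  | succ i =>
      exact commutatorElement_mem_Tcl_succ_of_mem_lowerCentralSeries
        (Subgroup.lowerCentralSeries_antitone ⊤ i.le_succ hx) hr

theorem Tcl_le_comap {F : Type*} [Group F] (c : ℕ) (θ : F →* G) {R : Subgroup F}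
    {R' : Subgroup G} (hR : R ≤ R'.comap θ) : Tcl c R ≤ (Tcl c R').comap θ :=
  (closure_le _).2 fun _ hs => subset_closure ⟨apply_mem_Tset θ hs.1, hR hs.2⟩

end Tcl

section PointwiseProduct

variable {F Q : Type*} [Group F] [Group Q] {L : Subgroup F} {A B P : F →* Q}

theorem mul_apply_mul_of_mem_left (hBA : ∀ x ∈ L, ∀ g, Commute (B x) (A g)) {x : F}
    (hx : x ∈ L) (y : F) : A (x * y) * B (x * y) = A x * B x * (A y * B y) := by
  rw [map_mul, map_mul, (hBA x hx y).symm.mul_mul_mul_comm]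

theorem mul_apply_mul_of_mem_right (hAB : ∀ x ∈ L, ∀ g, Commute (A x) (B g)) {x : F}
    (hx : x ∈ L) (y : F) : A (y * x) * B (y * x) = A y * B y * (A x * B x) := by
  rw [map_mul, map_mul, (hAB x hx y).mul_mul_mul_comm]

theorem inv_apply_mul_of_mem (hAB : ∀ x ∈ L, ∀ g, Commute (A x) (B g)) {x : F} (hx : x ∈ L) :
    A x⁻¹ * B x⁻¹ = (A x * B x)⁻¹ := by
  refine eq_inv_of_mul_eq_one_left ?_
  rw [← mul_apply_mul_of_mem_right hAB hx, inv_mul_cancel, map_one, map_one, one_mul]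

theorem conj_apply_mul_of_mem [L.Normal] (hAB : ∀ x ∈ L, ∀ g, Commute (A x) (B g))
    (hBA : ∀ x ∈ L, ∀ g, Commute (B x) (A g))
    (hdefect : ∀ g, ∀ x ∈ L, Commute ((P g)⁻¹ * (A g * B g)) (A x * B x))
    (g : F) {x : F} (hx : x ∈ L) :
    A (g * x * g⁻¹) * B (g * x * g⁻¹) = P g * (A x * B x) * (P g)⁻¹ := by
  have hconj : A (g * x * g⁻¹) * B (g * x * g⁻¹) * (A g * B g) = A g * B g * (A x * B x) := by
    rw [← mul_apply_mul_of_mem_left hBA (‹L.Normal›.conj_mem x hx g),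
      ← mul_apply_mul_of_mem_right hAB hx, inv_mul_cancel_right]
  obtain ⟨d, hd, hgd⟩ : ∃ d, Commute d (A x * B x) ∧ A g * B g = P g * d :=
    ⟨_, hdefect g x hx, (mul_inv_cancel_left _ _).symm⟩
  rw [eq_mul_inv_of_mul_eq hconj, hgd, mul_assoc (P g), hd.eq]
  group

theorem apply_eq_mul_of_mem_commutator [L.Normal] (hAB : ∀ x ∈ L, ∀ g, Commute (A x) (B g))
    (hBA : ∀ x ∈ L, ∀ g, Commute (B x) (A g))
    (hdefect : ∀ g, ∀ x ∈ L, Commute ((P g)⁻¹ * (A g * B g)) (A x * B x))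
    (hcentral : ∀ a ∈ L, (P a)⁻¹ * (A a * B a) ∈ center Q) {x : F}
    (hx : x ∈ ⁅L, (⊤ : Subgroup F)⁆) : P x = A x * B x := by
  let H : Subgroup F :=
    { carrier := {x | x ∈ L ∧ P x = A x * B x}
      one_mem' := ⟨one_mem L, by simp⟩
      mul_mem' := fun {x y} ⟨hx, ex⟩ ⟨hy, ey⟩ =>
        ⟨mul_mem hx hy, by rw [mul_apply_mul_of_mem_left hBA hx, map_mul, ex, ey]⟩
      inv_mem' := fun {x} ⟨hx, ex⟩ =>
        ⟨inv_mem hx, by rw [inv_apply_mul_of_mem hAB hx, map_inv, ex]⟩ }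
  refine ((commutator_le (H₃ := H)).2 (fun a ha g _ => ⟨?_, ?_⟩) hx).2
  · exact commutator_le_left L (⊤ : Subgroup F) (commutator_mem_commutator ha (mem_top g))
  obtain ⟨δ, hδ, hua⟩ : ∃ δ ∈ center Q, A a * B a = P a * δ :=
    ⟨_, hcentral a ha, (mul_inv_cancel_left _ _).symm⟩
  have hcomm : ⁅a, g⁆ = a * (g * a⁻¹ * g⁻¹) := by group
  rw [map_commutatorElement, ← commutatorElement_mul_of_mem_center hδ, hcomm,
    mul_apply_mul_of_mem_left hBA ha, conj_apply_mul_of_mem hAB hBA hdefect g (inv_mem ha),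
    inv_apply_mul_of_mem hAB ha, hua, commutatorElement_def]
  group

end PointwiseProduct

section Decomposition

variable {F G : Type*} [Group F] [Group G] {R : Subgroup G} [R.Normal]

theorem commutatorElement_apply_mem_Tcl_succ {α β : F →* G} (h : ∀ x y, ⁅α x, β y⁆ ∈ R)
    {i : ℕ} {x : F} (hx : x ∈ (⊤ : Subgroup F).lowerCentralSeries i) (g : F) :
    ⁅α x, β g⁆ ∈ Tcl (i + 1) R := by
  refine commutatorElement_mem_Tcl_succ (T := α '' Tset F i)
    (Set.image_subset_iff.2 fun s hs => apply_mem_Tset α hs) ?_ ?_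
  · rintro _ ⟨s, -, rfl⟩
    exact h s g
  · rw [← MonoidHom.map_closure, closure_Tset]
    exact mem_map_of_mem α hx

theorem inv_apply_mul_mem_Tcl (φ θ₁ θ₂ : F →* G) (hφ : ∀ x, (φ x)⁻¹ * (θ₁ x * θ₂ x) ∈ R)
    (hθ : ∀ x y, ⁅θ₁ x, θ₂ y⁆ ∈ R) (i : ℕ) {x : F}
    (hx : x ∈ (⊤ : Subgroup F).lowerCentralSeries i) :
    (φ x)⁻¹ * (θ₁ x * θ₂ x) ∈ Tcl i R := by
  induction i generalizing x with
  | zero => rw [Tcl_zero]; exact hφ x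
  | succ i ih =>
      let q := QuotientGroup.mk' (Tcl (i + 1) R)
      have hθ' : ∀ x y, ⁅θ₂ x, θ₁ y⁆ ∈ R := fun x y => by
        rw [← commutatorElement_inv, inv_mem_iff]
        exact hθ y x
      rw [← QuotientGroup.eq, ← QuotientGroup.mk'_apply, ← QuotientGroup.mk'_apply, map_mul]
      rw [Subgroup.lowerCentralSeries_succ] at hx
      refine apply_eq_mul_of_mem_commutator (A := q.comp θ₁) (B := q.comp θ₂) (P := q.comp φ)
        (fun x hx g => ?_) (fun x hx g => ?_) (fun g x hx => ?_) (fun a ha => ?_) hx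
      · exact commute_mk_iff_commutatorElement_mem.2
          (commutatorElement_apply_mem_Tcl_succ hθ hx g)
      · exact commute_mk_iff_commutatorElement_mem.2
          (commutatorElement_apply_mem_Tcl_succ hθ' hx g)
      · refine (commute_mk_iff_commutatorElement_mem.2
          (commutatorElement_mem_Tcl_succ_of_mem_lowerCentralSeries ?_ (hφ g))).symm
        exact mul_mem (apply_mem_lowerCentralSeries θ₁ hx) (apply_mem_lowerCentralSeries θ₂ hx)
      · refine mem_center_iff.2 fun z => ?_
        obtain ⟨g, rfl⟩ := QuotientGroup.mk_surjective z
        exact (commute_mk_iff_commutatorElement_mem.2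
          (commutatorElement_mem_Tcl_succ_of_mem_Tcl (ih ha) g)).symm

end Decomposition

/-- The quotient `(R ∩ γ_{c+1}(F)) / ⟨T_{c+1}(F) ∩ R⟩`. -/
abbrev TildeB₀ (c : ℕ) {F : Type*} [Group F] (R : Subgroup F) : Type _ :=
  ↥(R ⊓ (⊤ : Subgroup F).lowerCentralSeries c) ⧸
    (Tcl c R).subgroupOf (R ⊓ (⊤ : Subgroup F).lowerCentralSeries c)

namespace TildeB₀

variable (c : ℕ) {F G H : Type*} [Group F] [Group G] [Group H]

def restrict (θ : F →* G) {R : Subgroup F} {R' : Subgroup G} (hR : R ≤ R'.comap θ) :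
    ↥(R ⊓ (⊤ : Subgroup F).lowerCentralSeries c) →*
      ↥(R' ⊓ (⊤ : Subgroup G).lowerCentralSeries c) :=
  (θ.comp (R ⊓ (⊤ : Subgroup F).lowerCentralSeries c).subtype).codRestrict _ fun x =>
    mem_inf.2 ⟨hR (mem_inf.1 x.2).1, apply_mem_lowerCentralSeries θ (mem_inf.1 x.2).2⟩

variable {R : Subgroup F} {R' : Subgroup G} {R'' : Subgroup H}
variable [R.Normal] [R'.Normal] [R''.Normal]

def map (θ : F →* G) (hR : R ≤ R'.comap θ) : TildeB₀ c R →* TildeB₀ c R' :=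
  QuotientGroup.map _ _ (restrict c θ hR) fun _ hx =>
    mem_comap.2 (mem_subgroupOf.2 (Tcl_le_comap c θ hR (mem_subgroupOf.1 hx)))

theorem map_map (θ : F →* G) (θ' : G →* H) (hR : R ≤ R'.comap θ) (hR' : R' ≤ R''.comap θ')
    (z : TildeB₀ c R) :
    map c θ' hR' (map c θ hR z) =
      map c (θ'.comp θ) (hR.trans ((comap_mono hR').trans (comap_comap _ _ _).le)) z := by
  induction z using QuotientGroup.induction_on with
  | H x => rfl

theorem map_id (z : TildeB₀ c R) : map c (MonoidHom.id F) (comap_id _).ge z = z := by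
  induction z using QuotientGroup.induction_on with
  | H x => rfl

theorem map_one_hom (z : TildeB₀ c R) :
    map c (1 : F →* G) (fun _ _ => one_mem R') z = 1 := by
  induction z using QuotientGroup.induction_on with
  | H x => exact (QuotientGroup.eq_one_iff _).2 (one_mem (Tcl c R'))

theorem map_eq_mul_map {φ θ₁ θ₂ : F →* G} (hφR : R ≤ R'.comap φ) (hR₁ : R ≤ R'.comap θ₁)
    (hR₂ : R ≤ R'.comap θ₂) (hφ : ∀ x, (φ x)⁻¹ * (θ₁ x * θ₂ x) ∈ R')
    (hθ : ∀ x y, ⁅θ₁ x, θ₂ y⁆ ∈ R') (z : TildeB₀ c R) :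
    map c φ hφR z = map c θ₁ hR₁ z * map c θ₂ hR₂ z := by
  induction z using QuotientGroup.induction_on with
  | H x =>
      simp only [map, QuotientGroup.map_mk]
      rw [← QuotientGroup.mk_mul, QuotientGroup.eq]
      exact inv_apply_mul_mem_Tcl φ θ₁ θ₂ hφ hθ c (mem_inf.1 x.2).2

theorem commute (a b : TildeB₀ c R) : Commute a b := by
  induction a using QuotientGroup.induction_on with | H x =>
  induction b using QuotientGroup.induction_on with | H y =>
  exact commute_mk_iff_commutatorElement_mem.2
    (commutatorElement_mem_Tcl (mem_inf.1 x.2).2 (mem_inf.1 y.2).1)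

theorem map_eq_self_of_comp_eq (π : F →* G) {θ : F →* F} (hθ : π.comp θ = π)
    (hR : π.ker ≤ π.ker.comap θ) (z : TildeB₀ c π.ker) : map c θ hR z = z := by
  have hθx : ∀ x, π (θ x) = π x := DFunLike.congr_fun hθ
  have hsplit := map_eq_mul_map c (R := π.ker) (R' := π.ker) (φ := MonoidHom.id F) (θ₂ := 1)
    (comap_id _).ge hR (fun _ _ => one_mem π.ker) (fun x => by simp [hθx]) (by simp) z
  rw [map_one_hom, mul_one] at hsplit
  exact hsplit.symm.trans (map_id c z)

end TildeB₀

namespace FreeGroup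

noncomputable def liftAlong {α G H : Type*} [Group G] [Group H] (π : FreeGroup α →* G)
    {σ : H →* G} (hσ : Function.Surjective σ) : FreeGroup α →* H :=
  lift (Function.surjInv hσ ∘ π ∘ of)

theorem comp_liftAlong {α G H : Type*} [Group G] [Group H] (π : FreeGroup α →* G)
    {σ : H →* G} (hσ : Function.Surjective σ) : σ.comp (liftAlong π hσ) = π :=
  ext_hom _ _ fun _ => by simp [liftAlong, Function.surjInv_eq hσ]

variable {α₁ α₂ : Type*}

def retractLeft : FreeGroup (α₁ ⊕ α₂) →* FreeGroup α₁ := lift (Sum.elim of 1)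

def retractRight : FreeGroup (α₁ ⊕ α₂) →* FreeGroup α₂ := lift (Sum.elim 1 of)

theorem retractLeft_comp_map_inl :
    retractLeft.comp (map (Sum.inl : α₁ → α₁ ⊕ α₂)) = MonoidHom.id _ :=
  ext_hom _ _ fun _ => by simp [retractLeft]

theorem retractLeft_comp_map_inr :
    retractLeft.comp (map (Sum.inr : α₂ → α₁ ⊕ α₂)) = 1 :=
  ext_hom _ _ fun _ => by simp [retractLeft]

theorem retractRight_comp_map_inl :
    retractRight.comp (map (Sum.inl : α₁ → α₁ ⊕ α₂)) = 1 :=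
  ext_hom _ _ fun _ => by simp [retractRight]

theorem retractRight_comp_map_inr :
    retractRight.comp (map (Sum.inr : α₂ → α₁ ⊕ α₂)) = MonoidHom.id _ :=
  ext_hom _ _ fun _ => by simp [retractRight]

@[simp]
theorem retractLeft_map_inl (x : FreeGroup α₁) :
    retractLeft (map (Sum.inl : α₁ → α₁ ⊕ α₂) x) = x :=
  DFunLike.congr_fun retractLeft_comp_map_inl x

@[simp]
theorem retractLeft_map_inr (x : FreeGroup α₂) :
    retractLeft (map (Sum.inr : α₂ → α₁ ⊕ α₂) x) = 1 :=
  DFunLike.congr_fun retractLeft_comp_map_inr x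

@[simp]
theorem retractRight_map_inl (x : FreeGroup α₁) :
    retractRight (map (Sum.inl : α₁ → α₁ ⊕ α₂) x) = 1 :=
  DFunLike.congr_fun retractRight_comp_map_inl x

@[simp]
theorem retractRight_map_inr (x : FreeGroup α₂) :
    retractRight (map (Sum.inr : α₂ → α₁ ⊕ α₂) x) = x :=
  DFunLike.congr_fun retractRight_comp_map_inr x

end FreeGroup

open FreeGroup in
def prodPresentation {α₁ α₂ G₁ G₂ : Type*} [Group G₁] [Group G₂] (π₁ : FreeGroup α₁ →* G₁)
    (π₂ : FreeGroup α₂ →* G₂) : FreeGroup (α₁ ⊕ α₂) →* G₁ × G₂ :=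
  (π₁.comp retractLeft).prod (π₂.comp retractRight)

section ProdPresentation

open FreeGroup

variable {α₁ α₂ G₁ G₂ : Type*} [Group G₁] [Group G₂] (π₁ : FreeGroup α₁ →* G₁)
  (π₂ : FreeGroup α₂ →* G₂)

@[simp]
theorem prodPresentation_apply (x : FreeGroup (α₁ ⊕ α₂)) :
    prodPresentation π₁ π₂ x = (π₁ (retractLeft x), π₂ (retractRight x)) := rfl

theorem prodPresentation_surjective (hπ₁ : Function.Surjective π₁)
    (hπ₂ : Function.Surjective π₂) : Function.Surjective (prodPresentation π₁ π₂) := by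
  rintro ⟨g₁, g₂⟩
  obtain ⟨u, rfl⟩ := hπ₁ g₁
  obtain ⟨w, rfl⟩ := hπ₂ g₂
  exact ⟨map Sum.inl u * map Sum.inr w, by simp⟩

theorem ker_prodPresentation :
    (prodPresentation π₁ π₂).ker = π₁.ker.comap retractLeft ⊓ π₂.ker.comap retractRight :=
  MonoidHom.ker_prod _ _

theorem ker_le_comap_map_inl :
    π₁.ker ≤ (prodPresentation π₁ π₂).ker.comap (map Sum.inl) := fun x hx => by
  simpa using hx

theorem ker_le_comap_map_inr :
    π₂.ker ≤ (prodPresentation π₁ π₂).ker.comap (map Sum.inr) := fun x hx => by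
  simpa using hx

end ProdPresentation

namespace TildeB₀

open FreeGroup

variable (c : ℕ)

noncomputable def equivOfPresentations {α β G : Type*} [Group G] (π : FreeGroup α →* G)
    (hπ : Function.Surjective π) (π' : FreeGroup β →* G) (hπ' : Function.Surjective π') :
    TildeB₀ c π.ker ≃* TildeB₀ c π'.ker :=
  have h : π.ker ≤ π'.ker.comap (liftAlong π hπ') :=
    le_of_eq (by rw [MonoidHom.comap_ker, comp_liftAlong])
  have h' : π'.ker ≤ π.ker.comap (liftAlong π' hπ) :=
    le_of_eq (by rw [MonoidHom.comap_ker, comp_liftAlong])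
  MonoidHom.toMulEquiv (map c _ h) (map c _ h')
    (MonoidHom.ext fun z => (map_map c _ _ h h' z).trans (map_eq_self_of_comp_eq c π
      (by rw [← MonoidHom.comp_assoc, comp_liftAlong, comp_liftAlong]) _ z))
    (MonoidHom.ext fun z => (map_map c _ _ h' h z).trans (map_eq_self_of_comp_eq c π'
      (by rw [← MonoidHom.comp_assoc, comp_liftAlong, comp_liftAlong]) _ z))

variable {α₁ α₂ G₁ G₂ : Type*} [Group G₁] [Group G₂] (π₁ : FreeGroup α₁ →* G₁)
  (π₂ : FreeGroup α₂ →* G₂)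

noncomputable def prodEquiv :
    TildeB₀ c (prodPresentation π₁ π₂).ker ≃* TildeB₀ c π₁.ker × TildeB₀ c π₂.ker :=
  have hl := (ker_prodPresentation π₁ π₂).trans_le inf_le_left
  have hr := (ker_prodPresentation π₁ π₂).trans_le inf_le_right
  MonoidHom.toMulEquiv ((map c _ hl).prod (map c _ hr))
    ((map c _ (ker_le_comap_map_inl π₁ π₂)).noncommCoprod (map c _ (ker_le_comap_map_inr π₁ π₂))
      fun _ _ => commute c _ _)
    (MonoidHom.ext fun z => by
      rw [MonoidHom.comp_apply, MonoidHom.noncommCoprod_apply, MonoidHom.prod_apply,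
        map_map, map_map, ← map_eq_mul_map c (R := (prodPresentation π₁ π₂).ker)
        (R' := (prodPresentation π₁ π₂).ker) (φ := MonoidHom.id _) (comap_id _).ge, map_id]
      · rfl
      · simp
      · simp [commutatorElement_def])
    (MonoidHom.ext fun ⟨m, n⟩ => by
      simp only [MonoidHom.comp_apply, MonoidHom.noncommCoprod_apply, MonoidHom.prod_apply,
        _root_.map_mul, map_map, retractLeft_comp_map_inl, retractLeft_comp_map_inr,
        retractRight_comp_map_inl, retractRight_comp_map_inr, map_id, map_one_hom]
      simp)

end TildeB₀

theorem stmt11_general (c : ℕ) {G₁ G₂ : Type*} [Group G₁] [Group G₂] {α₁ α₂ α : Type*}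
    (π₁ : FreeGroup α₁ →* G₁) (hπ₁ : Function.Surjective π₁)
    (π₂ : FreeGroup α₂ →* G₂) (hπ₂ : Function.Surjective π₂)
    (π : FreeGroup α →* G₁ × G₂) (hπ : Function.Surjective π) :
    Nonempty
      ((↥(π.ker ⊓ (⊤ : Subgroup (FreeGroup α)).lowerCentralSeries c) ⧸
          (Tcl c π.ker).subgroupOf (π.ker ⊓ (⊤ : Subgroup (FreeGroup α)).lowerCentralSeries c)) ≃*
        (↥(π₁.ker ⊓ (⊤ : Subgroup (FreeGroup α₁)).lowerCentralSeries c) ⧸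
            (Tcl c π₁.ker).subgroupOf (π₁.ker ⊓ (⊤ : Subgroup (FreeGroup α₁)).lowerCentralSeries c)) ×
          (↥(π₂.ker ⊓ (⊤ : Subgroup (FreeGroup α₂)).lowerCentralSeries c) ⧸
            (Tcl c π₂.ker).subgroupOf (π₂.ker ⊓ (⊤ : Subgroup (FreeGroup α₂)).lowerCentralSeries c))) :=
  ⟨(TildeB₀.equivOfPresentations c π hπ _ (prodPresentation_surjective π₁ π₂ hπ₁ hπ₂)).trans
    (TildeB₀.prodEquiv c π₁ π₂)⟩

/-- for `c ≥ 1`, the `c`-nilpotent `B̃₀`-invariant of `G₁ × G₂` is the direct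
product of the `c`-nilpotent `B̃₀`-invariants of `G₁` and `G₂`; the invariant of `G` is
`(R ∩ γ_{c+1}(F))/⟨T_{c+1}(F) ∩ R⟩ = (R ⊓ lowerCentralSeries F c)/Tcl c R` for any free
presentation `π : F ↠ G`, `R = ker π`. -/
theorem stmt11 (c : ℕ) (hc : 1 ≤ c) {G₁ G₂ : Type*} [Group G₁] [Group G₂] {α₁ α₂ α : Type*}
    (π₁ : FreeGroup α₁ →* G₁) (hπ₁ : Function.Surjective π₁)
    (π₂ : FreeGroup α₂ →* G₂) (hπ₂ : Function.Surjective π₂)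
    (π : FreeGroup α →* G₁ × G₂) (hπ : Function.Surjective π) :
    Nonempty
      ((↥(π.ker ⊓ (⊤ : Subgroup (FreeGroup α)).lowerCentralSeries c) ⧸
          (Tcl c π.ker).subgroupOf (π.ker ⊓ (⊤ : Subgroup (FreeGroup α)).lowerCentralSeries c)) ≃*
        (↥(π₁.ker ⊓ (⊤ : Subgroup (FreeGroup α₁)).lowerCentralSeries c) ⧸
            (Tcl c π₁.ker).subgroupOf (π₁.ker ⊓ (⊤ : Subgroup (FreeGroup α₁)).lowerCentralSeries c)) ×
          (↥(π₂.ker ⊓ (⊤ : Subgroup (FreeGroup α₂)).lowerCentralSeries c) ⧸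
            (Tcl c π₂.ker).subgroupOf (π₂.ker ⊓ (⊤ : Subgroup (FreeGroup α₂)).lowerCentralSeries c))) :=
  stmt11_general c π₁ hπ₁ π₂ hπ₂ π hπ
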